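/- arXiv:1706.00215 — 6 statements merged into one kernel-verified Lean document; each statement's English description precedes it below -/
import Mathlib

section
/- For every positive integer n and every integer k with 1 ≤ k ≤ n/3, the sum of binomial coefficients C(n,0) + C(n,1) + ... + C(n,k-1) is strictly less than C(n,k). -/
/-! The ratio `C(n, j+1) / C(n, j) = (n - j) / (j + 1)` is at least `2` as long as `j < k ≤ n / 3`,
so `C(n, 0), …, C(n, k)` at least double at each step, and a doubling sequence exceeds the sum
of all its earlier terms. -/

theorem sum_range_add_le_of_add_self_le_succ {M : Type*} [AddCommMonoid M] [PartialOrder M]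
    [IsOrderedAddMonoid M] (f : ℕ → M) (k : ℕ) (hf : ∀ j < k, f j + f j ≤ f (j + 1)) :
    ∑ j ∈ Finset.range k, f j + f 0 ≤ f k := by
  induction k with
  | zero => simp
  | succ k ih =>
    calc ∑ j ∈ Finset.range (k + 1), f j + f 0
        = (∑ j ∈ Finset.range k, f j + f 0) + f k := by
          rw [Finset.sum_range_succ, add_right_comm]
      _ ≤ f k + f k := add_le_add_left (ih fun j hj => hf j (by omega)) _
      _ ≤ f (k + 1) := hf k k.lt_succ_self

theorem Nat.two_mul_choose_le_choose_succ {n j : ℕ} (h : 3 * j + 2 ≤ n) :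
    2 * n.choose j ≤ n.choose (j + 1) := by
  refine Nat.le_of_mul_le_mul_right ?_ j.succ_pos
  calc 2 * n.choose j * (j + 1) = n.choose j * (2 * (j + 1)) := by ring
    _ ≤ n.choose j * (n - j) := Nat.mul_le_mul_left _ (by omega)
    _ = n.choose (j + 1) * (j + 1) := (Nat.choose_succ_right_eq n j).symm

theorem stmt_0_general (n k : ℕ) (hkn : 3 * k ≤ n) :
    ∑ j ∈ Finset.range k, n.choose j < n.choose k := by
  have hdouble : ∀ j < k, n.choose j + n.choose j ≤ n.choose (j + 1) := fun j hj => by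
    rw [← two_mul]
    exact Nat.two_mul_choose_le_choose_succ (by omega)
  have := sum_range_add_le_of_add_self_le_succ (n.choose ·) k hdouble
  rw [Nat.choose_zero_right] at this
  omega

theorem stmt_0 (n k : ℕ) (hk : 1 ≤ k) (hkn : 3 * k ≤ n) :
    ∑ j ∈ Finset.range k, n.choose j < n.choose k :=
  stmt_0_general n k hkn
end

section
/- Let F be a family of subsets of [n+1] obtained as the double of a family G ⊆ 2^[n], i.e., F = {S ⊆ [n+1] : S ∩ [n] ∈ G}. If G is partition-free, then F is partition-free, and |F| = 2|G|. -/
/-- A family of finite sets is partition-free if it contains no `F₀, F₁, F₂`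
with `F₁ ∩ F₂ = ∅` and `F₀ = F₁ ∪ F₂`. -/
def PartitionFree (F : Finset (Finset ℕ)) : Prop :=
  ¬ ∃ F₀ ∈ F, ∃ F₁ ∈ F, ∃ F₂ ∈ F, F₁ ∩ F₂ = ∅ ∧ F₀ = F₁ ∪ F₂

/- Intersecting with a fixed set `T` preserves disjointness and unions, so a partition in `F`
restricts to a partition in `G`. Doubling `G` inside `insert a s` pairs each `S ∈ G` with
`insert a S`, and these two copies of `G` are disjoint. -/

namespace Finset

variable {α : Type*} [DecidableEq α]

theorem filter_powerset_insert_inter_mem {s : Finset α} {a : α} {G : Finset (Finset α)}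
    (ha : a ∉ s) (hG : G ⊆ s.powerset) :
    (insert a s).powerset.filter (fun S => S ∩ s ∈ G) = G ∪ G.image (insert a) := by
  have hrestrict : s.powerset.filter (fun S => S ∩ s ∈ G) = G :=
    calc s.powerset.filter (fun S => S ∩ s ∈ G) = s.powerset.filter (· ∈ G) :=
          filter_congr fun S hS => by rw [inter_eq_left.mpr (mem_powerset.mp hS)]
      _ = G := by rw [filter_mem_eq_inter, inter_eq_right.mpr hG]
  rw [powerset_insert, filter_union, filter_image, hrestrict]
  simp only [insert_inter_of_notMem ha, hrestrict]

theorem card_union_image_insert {a : α} {G : Finset (Finset α)} (hnotMem : ∀ S ∈ G, a ∉ S) :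
    (G ∪ G.image (insert a)).card = 2 * G.card := by
  have hdisj : Disjoint G (G.image (insert a)) := by
    rw [disjoint_right]
    intro T hT hTG
    obtain ⟨S, -, rfl⟩ := mem_image.mp hT
    exact hnotMem _ hTG (mem_insert_self a S)
  have hinj : Set.InjOn (insert a) (G : Set (Finset α)) :=
    insert_erase_invOn.2.injOn.mono hnotMem
  rw [card_union_of_disjoint hdisj, card_image_of_injOn hinj, two_mul]

end Finset

theorem PartitionFree.of_inter_mem {G F : Finset (Finset ℕ)} (T : Finset ℕ)
    (hG : PartitionFree G) (hF : ∀ S ∈ F, S ∩ T ∈ G) : PartitionFree F := by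
  rintro ⟨F₀, h₀, F₁, h₁, F₂, h₂, hdisj, rfl⟩
  refine hG ⟨_, hF _ h₀, _, hF _ h₁, _, hF _ h₂, ?_, Finset.union_inter_distrib_right F₁ F₂ T⟩
  rw [← Finset.inter_inter_distrib_right, hdisj, Finset.empty_inter]

theorem stmt_4 (n : ℕ) (G : Finset (Finset ℕ))
    (hG : G ⊆ (Finset.range n).powerset)
    (F : Finset (Finset ℕ))
    (hF : F = (Finset.range (n + 1)).powerset.filter
      (fun S => S ∩ Finset.range n ∈ G))
    (hGpf : PartitionFree G) :
    PartitionFree F ∧ F.card = 2 * G.card := by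
  subst hF
  refine ⟨hGpf.of_inter_mem (Finset.range n) fun S hS => (Finset.mem_filter.mp hS).2, ?_⟩
  have hn : n ∉ Finset.range n := Finset.notMem_range_self
  rw [Finset.range_add_one, Finset.filter_powerset_insert_inter_mem hn hG,
    Finset.card_union_image_insert fun S hS =>
      Finset.notMem_of_mem_powerset_of_notMem (hG hS) hn]
end

section
/- Let S₁, S₂, S₃ ⊆ [n] be pairwise disjoint sets, and let F₁, F₂, F₃ ⊆ 2^[n] be cross partition-free families. Then the number of pairs (i, T) with i ∈ {1,2,3}, T ∈ {S_i, S_{i+1} ∪ S_{i-1}} (indices mod 3), and T ∈ F_i, is at most 4. -/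
/-!
Each pair `(i, T)` is a membership `T ∈ Fᵢ`. Partition-freeness forbids the three triples
`S₂ ∪ S₃ ∈ F₁, S₂ ∈ F₂, S₃ ∈ F₃`, `S₁ ∈ F₁, S₃ ∪ S₁ ∈ F₂, S₃ ∈ F₃` and `S₁ ∈ F₁, S₂ ∈ F₂, S₁ ∪ S₂ ∈ F₃`
from holding simultaneously. Each of the six memberships lies in at most two of these triples,
so at least two memberships must fail.
-/

open Finset

/-- `F₁, F₂, F₃` are cross partition-free if there is no `A ∈ F₁`, `B ∈ F₂`,
`C ∈ F₃` such that one of them is the disjoint union of the other two. -/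
def CrossPartitionFree (F₁ F₂ F₃ : Finset (Finset ℕ)) : Prop :=
  ¬ ∃ A ∈ F₁, ∃ B ∈ F₂, ∃ C ∈ F₃,
    (B ∩ C = ∅ ∧ A = B ∪ C) ∨ (A ∩ C = ∅ ∧ B = A ∪ C) ∨ (A ∩ B = ∅ ∧ C = A ∪ B)

namespace CrossPartitionFree

variable {F₁ F₂ F₃ : Finset (Finset ℕ)} {A B C : Finset ℕ}

theorem union_notMem_left (h : CrossPartitionFree F₁ F₂ F₃) (hB : B ∈ F₂) (hC : C ∈ F₃)
    (hBC : Disjoint B C) : B ∪ C ∉ F₁ := fun hA =>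
  h ⟨_, hA, B, hB, C, hC, .inl ⟨disjoint_iff_inter_eq_empty.mp hBC, rfl⟩⟩

theorem union_notMem_middle (h : CrossPartitionFree F₁ F₂ F₃) (hA : A ∈ F₁) (hC : C ∈ F₃)
    (hAC : Disjoint A C) : A ∪ C ∉ F₂ := fun hB =>
  h ⟨A, hA, _, hB, C, hC, .inr (.inl ⟨disjoint_iff_inter_eq_empty.mp hAC, rfl⟩)⟩

theorem union_notMem_right (h : CrossPartitionFree F₁ F₂ F₃) (hA : A ∈ F₁) (hB : B ∈ F₂)
    (hAB : Disjoint A B) : A ∪ B ∉ F₃ := fun hC =>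
  h ⟨A, hA, B, hB, _, hC, .inr (.inr ⟨disjoint_iff_inter_eq_empty.mp hAB, rfl⟩)⟩

end CrossPartitionFree

theorem card_pair_inter_le {α : Type*} [DecidableEq α] (a b : α) (F : Finset α) :
    #({a, b} ∩ F) ≤ (if a ∈ F then 1 else 0) + (if b ∈ F then 1 else 0) := by
  by_cases ha : a ∈ F <;> by_cases hb : b ∈ F <;>
    simp [insert_inter_of_mem, insert_inter_of_notMem, ha, hb, card_le_two]

theorem indicator_sum_le_four_of_not_and (p p' q q' r r' : Prop) [Decidable p] [Decidable p']
    [Decidable q] [Decidable q'] [Decidable r] [Decidable r'] (h₁ : ¬(p' ∧ q ∧ r))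
    (h₂ : ¬(p ∧ q' ∧ r)) (h₃ : ¬(p ∧ q ∧ r')) :
    (if p then 1 else 0) + (if p' then 1 else 0) + ((if q then 1 else 0) + (if q' then 1 else 0)) +
      ((if r then 1 else 0) + (if r' then 1 else 0)) ≤ 4 := by
  split_ifs <;> simp_all

theorem stmt_8_general (S₁ S₂ S₃ : Finset ℕ)
    (h12 : Disjoint S₁ S₂) (h13 : Disjoint S₁ S₃) (h23 : Disjoint S₂ S₃)
    (F₁ F₂ F₃ : Finset (Finset ℕ))
    (hcpf : CrossPartitionFree F₁ F₂ F₃) :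
    (({S₁, S₂ ∪ S₃} : Finset (Finset ℕ)) ∩ F₁).card +
      (({S₂, S₃ ∪ S₁} : Finset (Finset ℕ)) ∩ F₂).card +
      (({S₃, S₁ ∪ S₂} : Finset (Finset ℕ)) ∩ F₃).card ≤ 4 := by
  have h₁ : ¬(S₂ ∪ S₃ ∈ F₁ ∧ S₂ ∈ F₂ ∧ S₃ ∈ F₃) := fun ⟨hA, hB, hC⟩ =>
    hcpf.union_notMem_left hB hC h23 hA
  have h₂ : ¬(S₁ ∈ F₁ ∧ S₃ ∪ S₁ ∈ F₂ ∧ S₃ ∈ F₃) := fun ⟨hA, hB, hC⟩ =>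
    hcpf.union_notMem_middle hA hC h13 (union_comm S₃ S₁ ▸ hB)
  have h₃ : ¬(S₁ ∈ F₁ ∧ S₂ ∈ F₂ ∧ S₁ ∪ S₂ ∈ F₃) := fun ⟨hA, hB, hC⟩ =>
    hcpf.union_notMem_right hA hB h12 hC
  calc _ ≤ _ := add_le_add (add_le_add (card_pair_inter_le S₁ (S₂ ∪ S₃) F₁)
          (card_pair_inter_le S₂ (S₃ ∪ S₁) F₂)) (card_pair_inter_le S₃ (S₁ ∪ S₂) F₃)
    _ ≤ 4 := indicator_sum_le_four_of_not_and _ _ _ _ _ _ h₁ h₂ h₃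

theorem stmt_8 (n : ℕ) (S₁ S₂ S₃ : Finset ℕ)
    (hS₁ : S₁ ⊆ Finset.range n) (hS₂ : S₂ ⊆ Finset.range n)
    (hS₃ : S₃ ⊆ Finset.range n)
    (h12 : Disjoint S₁ S₂) (h13 : Disjoint S₁ S₃) (h23 : Disjoint S₂ S₃)
    (F₁ F₂ F₃ : Finset (Finset ℕ))
    (hF₁ : F₁ ⊆ (Finset.range n).powerset)
    (hF₂ : F₂ ⊆ (Finset.range n).powerset)
    (hF₃ : F₃ ⊆ (Finset.range n).powerset)
    (hcpf : CrossPartitionFree F₁ F₂ F₃) :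
    (({S₁, S₂ ∪ S₃} : Finset (Finset ℕ)) ∩ F₁).card +
      (({S₂, S₃ ∪ S₁} : Finset (Finset ℕ)) ∩ F₂).card +
      (({S₃, S₁ ∪ S₂} : Finset (Finset ℕ)) ∩ F₃).card ≤ 4 :=
  stmt_8_general S₁ S₂ S₃ h12 h13 h23 F₁ F₂ F₃ hcpf
end

section
/- Let F₁, F₂, F₃ ⊆ 2^[n] be cross partition-free families and let s₁, s₂, s₃ be nonnegative integers with s₁ + s₂ + s₃ ≤ n. For each family F_i and each integer t let y_i^t = C(n,t) − |{F ∈ F_i : |F| = t}| be the number of t-sets missing from F_i. Then ∑_{i=1}^{3} [ y_i^{s_i}/C(n,s_i) + y_i^{s_{i+1}+s_{i-1}}/C(n, s_{i+1}+s_{i-1}) ] ≥ 2, where indices are taken cyclically in {1,2,3}. -/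
/-- `y F t` is the number of `t`-element subsets of `[n]` missing from `F`. -/
noncomputable def missing (n : ℕ) (F : Finset (Finset ℕ)) (t : ℕ) : ℝ :=
  (n.choose t : ℝ) - (F.filter (fun S => S.card = t)).card

/-!
Average over a uniformly random permutation `σ` of `[n]` applied to fixed pairwise disjoint
sets `J₁, J₂, J₃` of sizes `s₁, s₂, s₃`. The image of a fixed `t`-set under `σ` is a uniform
`t`-set, so the probability that `σ J₁ ∈ F₁` is the density of `F₁` in layer `s₁`, and likewise
for `σ (J₂ ∪ J₃) ∈ F₁` and the other four events. For every `σ`, cross partition-freeness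
forbids each of the triples `(σ(J₂ ∪ J₃), σJ₂, σJ₃)`, `(σJ₁, σ(J₃ ∪ J₁), σJ₃)`,
`(σJ₁, σJ₂, σ(J₁ ∪ J₂))`, and this leaves room for at most four of the six events. Hence the
six densities sum to at most `4`, i.e. the six missing fractions sum to at least `2`.
-/

open Finset
open scoped Pointwise Nat

theorem MulAction.card_nsmul_sum_smul_eq {G X M : Type*} [Group G] [Fintype G] [MulAction G X]
    [Fintype X] [MulAction.IsPretransitive G X] [AddCommMonoid M] (f : X → M) (x : X) :
    Fintype.card X • ∑ g : G, f (g • x) = Fintype.card G • ∑ y, f y := by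
  -- By transitivity, reindexing `g ↦ g * h` moves the base point anywhere.
  have sum_eq : ∀ y, ∑ g : G, f (g • y) = ∑ g : G, f (g • x) := by
    intro y
    obtain ⟨h, rfl⟩ := MulAction.exists_smul_eq G x y
    exact Fintype.sum_equiv (Equiv.mulRight h) _ _ fun g => by simp [mul_smul]
  calc Fintype.card X • ∑ g : G, f (g • x) = ∑ y : X, ∑ g : G, f (g • y) := by simp [sum_eq]
    _ = ∑ g : G, ∑ y : X, f (g • y) := Finset.sum_comm
    _ = ∑ _g : G, ∑ y, f y :=
      Fintype.sum_congr _ _ fun g => Equiv.sum_comp (MulAction.toPerm g) f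
    _ = Fintype.card G • ∑ y, f y := by rw [sum_const, card_univ]

theorem Equiv.Perm.choose_mul_sum_smul_finset {α R : Type*} [Fintype α] [DecidableEq α]
    [Semiring R] (f : Finset α → R) (J : Finset α) :
    (Fintype.card α).choose #J * ∑ σ : Equiv.Perm α, f (σ • J)
      = (Fintype.card α)! * ∑ T ∈ univ.powersetCard #J, f T := by
  have := Set.powersetCard.isPretransitive (α := α) (n := #J)
  have h := MulAction.card_nsmul_sum_smul_eq (G := Equiv.Perm α)
    (fun T : Set.powersetCard α #J => f T) (Set.powersetCard.ofCard rfl)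
  rw [nsmul_eq_mul, nsmul_eq_mul, Fintype.card_perm, ← Nat.card_eq_fintype_card,
    Set.powersetCard.card, Nat.card_eq_fintype_card] at h
  simp only [Set.powersetCard.coe_smul, Set.powersetCard.val_ofCard] at h
  rw [h, Finset.sum_subtype (p := (· ∈ Set.powersetCard α #J)) _
    (fun T => by simp [Set.powersetCard.mem_iff])]

theorem ite_add_ite_add_ite_le_two {p q r : Prop} [Decidable p] [Decidable q] [Decidable r]
    (h : ¬(p ∧ q ∧ r)) :
    (if p then 1 else 0 : ℕ) + (if q then 1 else 0) + (if r then 1 else 0) ≤ 2 := by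
  split_ifs <;> simp_all

theorem Finset.exists_pairwise_disjoint_card_eq {α : Type*} [Fintype α] [DecidableEq α]
    {a b c : ℕ} (h : a + b + c ≤ Fintype.card α) :
    ∃ A B C : Finset α, Disjoint A B ∧ Disjoint A C ∧ Disjoint B C ∧
      #A = a ∧ #B = b ∧ #C = c := by
  obtain ⟨A, -, hA⟩ := exists_subset_card_eq (s := (univ : Finset α)) (n := a) (by simp; omega)
  obtain ⟨B, hBA, hB⟩ := exists_subset_card_eq (s := Aᶜ) (n := b) (by rw [card_compl, hA]; omega)
  have hAB : Disjoint A B := subset_compl_iff_disjoint_left.mp hBA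
  obtain ⟨C, hCAB, hC⟩ := exists_subset_card_eq (s := (A ∪ B)ᶜ) (n := c)
    (by rw [card_compl, card_union_of_disjoint hAB, hA, hB]; omega)
  rw [subset_compl_iff_disjoint_left, disjoint_union_left] at hCAB
  exact ⟨A, B, C, hAB, hCAB.1, hCAB.2, hA, hB, hC⟩

section

variable {n : ℕ}

theorem sum_powersetCard_indicator_map_val {F : Finset (Finset ℕ)} (hF : F ⊆ (range n).powerset)
    (k : ℕ) :
    ∑ T ∈ (univ : Finset (Fin n)).powersetCard k,
      (if T.map Fin.valEmbedding ∈ F then 1 else 0 : ℝ) = #{S ∈ F | #S = k} := by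
  rw [Finset.sum_boole]
  congr 1
  refine card_nbij (·.map Fin.valEmbedding) (fun T hT => ?_)
    (fun T _ T' _ h => map_injective _ h) (fun S hS => ?_)
  · simp only [coe_filter, Set.mem_ofPred_eq, mem_powersetCard] at hT ⊢
    exact ⟨hT.2, by rw [card_map, hT.1.2]⟩
  · simp only [coe_filter, Set.mem_ofPred_eq] at hS
    have hS' : S ⊆ (univ : Finset (Fin n)).map Fin.valEmbedding := by
      rw [Fin.map_valEmbedding_univ, Nat.Iio_eq_range]; exact mem_powerset.mp (hF hS.1)
    obtain ⟨T, -, rfl⟩ := subset_map_iff.mp hS'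
    exact ⟨T, by simpa [and_comm] using hS, rfl⟩

noncomputable def layerDensity (n : ℕ) (F : Finset (Finset ℕ)) (t : ℕ) : ℝ :=
  #{S ∈ F | #S = t} / n.choose t

theorem sum_perm_indicator_map_val {F : Finset (Finset ℕ)} (hF : F ⊆ (range n).powerset)
    (J : Finset (Fin n)) :
    ∑ σ : Equiv.Perm (Fin n), (if (σ • J).map Fin.valEmbedding ∈ F then 1 else 0 : ℝ)
      = n ! * layerDensity n F #J := by
  have h := Equiv.Perm.choose_mul_sum_smul_finset
    (fun T : Finset (Fin n) => (if T.map Fin.valEmbedding ∈ F then 1 else 0 : ℝ)) J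
  rw [sum_powersetCard_indicator_map_val hF, Fintype.card_fin] at h
  have hchoose : (n.choose #J : ℝ) ≠ 0 :=
    Nat.cast_ne_zero.mpr (Nat.choose_pos (by simpa using card_le_univ J)).ne'
  rw [layerDensity, mul_div_assoc', eq_div_iff hchoose, ← h, mul_comm]

theorem CrossPartitionFree.indicator_sum_le_four {F₁ F₂ F₃ : Finset (Finset ℕ)}
    (hcpf : CrossPartitionFree F₁ F₂ F₃) {B₁ B₂ B₃ : Finset ℕ} (h₁₂ : Disjoint B₁ B₂)
    (h₁₃ : Disjoint B₁ B₃) (h₂₃ : Disjoint B₂ B₃) :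
    (if B₁ ∈ F₁ then 1 else 0 : ℕ) + (if B₂ ∈ F₂ then 1 else 0) + (if B₃ ∈ F₃ then 1 else 0)
      + (if B₂ ∪ B₃ ∈ F₁ then 1 else 0) + (if B₃ ∪ B₁ ∈ F₂ then 1 else 0)
      + (if B₁ ∪ B₂ ∈ F₃ then 1 else 0) ≤ 4 := by
  have h₁ := ite_add_ite_add_ite_le_two (p := B₂ ∪ B₃ ∈ F₁) (q := B₂ ∈ F₂) (r := B₃ ∈ F₃)
    fun ⟨hA, hB, hC⟩ => hcpf ⟨_, hA, _, hB, _, hC, .inl ⟨disjoint_iff_inter_eq_empty.mp h₂₃, rfl⟩⟩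
  have h₂ := ite_add_ite_add_ite_le_two (p := B₁ ∈ F₁) (q := B₃ ∪ B₁ ∈ F₂) (r := B₃ ∈ F₃)
    fun ⟨hA, hB, hC⟩ => hcpf ⟨_, hA, _, hB, _, hC,
      .inr (.inl ⟨disjoint_iff_inter_eq_empty.mp h₁₃, union_comm _ _⟩)⟩
  have h₃ := ite_add_ite_add_ite_le_two (p := B₁ ∈ F₁) (q := B₂ ∈ F₂) (r := B₁ ∪ B₂ ∈ F₃)
    fun ⟨hA, hB, hC⟩ => hcpf ⟨_, hA, _, hB, _, hC,
      .inr (.inr ⟨disjoint_iff_inter_eq_empty.mp h₁₂, rfl⟩)⟩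
  -- The three constraints alone allow a fractional total of `5`; integrality gives `4`.
  have ite_le_one : ∀ (p : Prop) [Decidable p], (if p then 1 else 0 : ℕ) ≤ 1 := by
    intro p _; split_ifs <;> simp
  have := ite_le_one (B₁ ∈ F₁)
  have := ite_le_one (B₂ ∈ F₂)
  have := ite_le_one (B₃ ∈ F₃)
  have := ite_le_one (B₂ ∪ B₃ ∈ F₁)
  have := ite_le_one (B₃ ∪ B₁ ∈ F₂)
  have := ite_le_one (B₁ ∪ B₂ ∈ F₃)
  omega

theorem Finset.disjoint_map_val_smul {s t : Finset (Fin n)} (h : Disjoint s t)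
    (σ : Equiv.Perm (Fin n)) :
    Disjoint ((σ • s).map Fin.valEmbedding) ((σ • t).map Fin.valEmbedding) := by
  rw [disjoint_map, disjoint_iff_inter_eq_empty, ← smul_finset_inter,
    disjoint_iff_inter_eq_empty.mp h, smul_finset_empty]

theorem CrossPartitionFree.layerDensity_sum_le_four {F₁ F₂ F₃ : Finset (Finset ℕ)}
    (hF₁ : F₁ ⊆ (range n).powerset) (hF₂ : F₂ ⊆ (range n).powerset)
    (hF₃ : F₃ ⊆ (range n).powerset) (hcpf : CrossPartitionFree F₁ F₂ F₃)
    {J₁ J₂ J₃ : Finset (Fin n)} (h₁₂ : Disjoint J₁ J₂) (h₁₃ : Disjoint J₁ J₃)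
    (h₂₃ : Disjoint J₂ J₃) :
    layerDensity n F₁ #J₁ + layerDensity n F₂ #J₂ + layerDensity n F₃ #J₃
      + layerDensity n F₁ #(J₂ ∪ J₃) + layerDensity n F₂ #(J₃ ∪ J₁)
      + layerDensity n F₃ #(J₁ ∪ J₂) ≤ 4 := by
  have pointwise (σ : Equiv.Perm (Fin n)) := hcpf.indicator_sum_le_four
    (disjoint_map_val_smul h₁₂ σ) (disjoint_map_val_smul h₁₃ σ) (disjoint_map_val_smul h₂₃ σ)
  have summed := Finset.sum_le_sum fun σ (_ : σ ∈ univ) =>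
    (Nat.cast_le (α := ℝ)).mpr (pointwise σ)
  simp only [← map_union, ← smul_finset_union] at summed
  push_cast [sum_add_distrib, sum_perm_indicator_map_val, hF₁, hF₂, hF₃] at summed
  rw [sum_const, card_univ, Fintype.card_perm, Fintype.card_fin, nsmul_eq_mul] at summed
  simp only [← mul_add] at summed
  exact le_of_mul_le_mul_left summed (by positivity)

theorem missing_div_choose {t : ℕ} (F : Finset (Finset ℕ)) (ht : t ≤ n) :
    missing n F t / n.choose t = 1 - layerDensity n F t := by
  rw [missing, layerDensity, sub_div, div_self (by exact_mod_cast (Nat.choose_pos ht).ne')]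

end

theorem stmt_9 (n : ℕ) (F₁ F₂ F₃ : Finset (Finset ℕ))
    (hF₁ : F₁ ⊆ (Finset.range n).powerset)
    (hF₂ : F₂ ⊆ (Finset.range n).powerset)
    (hF₃ : F₃ ⊆ (Finset.range n).powerset)
    (hcpf : CrossPartitionFree F₁ F₂ F₃)
    (s₁ s₂ s₃ : ℕ) (hs : s₁ + s₂ + s₃ ≤ n) :
    (missing n F₁ s₁ / (n.choose s₁ : ℝ) +
        missing n F₁ (s₂ + s₃) / (n.choose (s₂ + s₃) : ℝ)) +
      (missing n F₂ s₂ / (n.choose s₂ : ℝ) +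
        missing n F₂ (s₃ + s₁) / (n.choose (s₃ + s₁) : ℝ)) +
      (missing n F₃ s₃ / (n.choose s₃ : ℝ) +
        missing n F₃ (s₁ + s₂) / (n.choose (s₁ + s₂) : ℝ)) ≥ 2 := by
  obtain ⟨J₁, J₂, J₃, h₁₂, h₁₃, h₂₃, rfl, rfl, rfl⟩ :=
    exists_pairwise_disjoint_card_eq (α := Fin n) (by rwa [Fintype.card_fin])
  have key := hcpf.layerDensity_sum_le_four hF₁ hF₂ hF₃ h₁₂ h₁₃ h₂₃
  rw [card_union_of_disjoint h₂₃, card_union_of_disjoint h₁₃.symm,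
    card_union_of_disjoint h₁₂] at key
  rw [missing_div_choose F₁ (by omega), missing_div_choose F₁ (by omega),
    missing_div_choose F₂ (by omega), missing_div_choose F₂ (by omega),
    missing_div_choose F₃ (by omega), missing_div_choose F₃ (by omega)]
  linarith
end

section
/- For n = 3m+1 with m ≥ 1 and any integer t with 2 ≤ t ≤ m−1, one has C(n, m+t) > C(n, t−1) + C(n, m−t). -/
/-!
With `n = 3m + 1`, unimodality of `k ↦ C(n, k)` bounds both terms on the right by `C(n, m - 1)`
and the left side from below by `C(n, m + 1)` (as `m + 1 ≤ m + t ≤ n - (m + 1)`). Finally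
`C(n, m + 1) / C(n, m - 1) = (2m + 2)(2m + 1) / ((m + 1) m) > 2`.
-/

namespace Nat

theorem choose_monotoneOn_Iic_half (n : ℕ) : MonotoneOn n.choose (Set.Iic (n / 2)) :=
  monotoneOn_of_le_succ Set.ordConnected_Iic fun k _ _ hk =>
    choose_le_succ_of_lt_half_left ((Order.lt_succ k).trans_le hk)

/-- Unimodality: `b` lies at least as close to the middle `n / 2` as `a` does. -/
theorem choose_le_choose_of_le_of_add_le {n a b : ℕ} (hab : a ≤ b) (h : a + b ≤ n) :
    n.choose a ≤ n.choose b := by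
  rcases le_or_gt b (n / 2) with hb | hb
  · exact choose_monotoneOn_Iic_half n (hab.trans hb) hb hab
  · rw [← choose_symm (by omega : b ≤ n)]
    exact choose_monotoneOn_Iic_half n (by omega : a ≤ n / 2) (by omega : n - b ≤ n / 2) (by omega)

theorem choose_add_two_mul (n k : ℕ) :
    n.choose (k + 2) * ((k + 2) * (k + 1)) = n.choose k * ((n - k) * (n - k - 1)) := by
  have h₁ := choose_succ_right_eq n k
  have h₂ := choose_succ_right_eq n (k + 1)
  rw [show n - (k + 1) = n - k - 1 by omega] at h₂
  calc n.choose (k + 2) * ((k + 2) * (k + 1))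
      = n.choose (k + 1) * (k + 1) * (n - k - 1) := by rw [← mul_assoc, h₂]; ring
    _ = n.choose k * ((n - k) * (n - k - 1)) := by rw [h₁]; ring

theorem two_mul_choose_lt_choose_add_two {n k : ℕ}
    (h : 2 * ((k + 2) * (k + 1)) < (n - k) * (n - k - 1)) :
    2 * n.choose k < n.choose (k + 2) := by
  have hk : k ≤ n := by
    by_contra! hkn
    simp [Nat.sub_eq_zero_of_le hkn.le] at h
  have hpos := choose_pos hk
  refine Nat.lt_of_mul_lt_mul_right (a := (k + 2) * (k + 1)) ?_
  calc 2 * n.choose k * ((k + 2) * (k + 1)) = n.choose k * (2 * ((k + 2) * (k + 1))) := by ring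
    _ < n.choose k * ((n - k) * (n - k - 1)) := Nat.mul_lt_mul_of_pos_left h hpos
    _ = n.choose (k + 2) * ((k + 2) * (k + 1)) := (choose_add_two_mul n k).symm

end Nat

theorem stmt_12_general (m t : ℕ) (ht : 2 ≤ t) (htm : t ≤ m - 1) :
    (3 * m + 1).choose (m + t) >
      (3 * m + 1).choose (t - 1) + (3 * m + 1).choose (m - t) := by
  obtain ⟨k, rfl⟩ : ∃ k, m = k + 1 := ⟨m - 1, by omega⟩
  have hmiddle : 2 * (3 * (k + 1) + 1).choose k < (3 * (k + 1) + 1).choose (k + 2) := by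
    refine Nat.two_mul_choose_lt_choose_add_two ?_
    rw [show 3 * (k + 1) + 1 - k = 2 * k + 4 by omega, show 2 * k + 4 - 1 = 2 * k + 3 by omega]
    nlinarith
  have h₁ : (3 * (k + 1) + 1).choose (t - 1) ≤ (3 * (k + 1) + 1).choose k :=
    Nat.choose_le_choose_of_le_of_add_le (by omega) (by omega)
  have h₂ : (3 * (k + 1) + 1).choose (k + 1 - t) ≤ (3 * (k + 1) + 1).choose k :=
    Nat.choose_le_choose_of_le_of_add_le (by omega) (by omega)
  have h₃ : (3 * (k + 1) + 1).choose (k + 2) ≤ (3 * (k + 1) + 1).choose (k + 1 + t) :=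
    Nat.choose_le_choose_of_le_of_add_le (by omega) (by omega)
  omega

theorem stmt_12 (m t : ℕ) (hm : 1 ≤ m) (ht : 2 ≤ t) (htm : t ≤ m - 1) :
    (3 * m + 1).choose (m + t) >
      (3 * m + 1).choose (t - 1) + (3 * m + 1).choose (m - t) :=
  stmt_12_general m t ht htm
end

section
/- Let G₁, G₂ ⊆ C([n], t) be cross-intersecting families (every set in G₁ intersects every set in G₂) with |G₁| ≥ |G₂|, let c ≥ 1 be a real number, and suppose n ≥ 2t. Then |G₁| + c·|G₂| ≤ max{ C(n,t), (c+1)·C(n−1, t−1) }. -/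
/-!
Complementing the members of `G₂` gives a family `ℱ` of `(n - t)`-sets whose `(n - 2t)`-th shadow
`D` consists of `t`-sets each missing a member of `G₂`; hence `D` is disjoint from `G₁` and
`|G₁| + |D| ≤ C(n, t)`. By Kruskal–Katona, `|D|` is at least the shadow of a colex initial segment
of size `min(|ℱ|, C(n-1, t-1))`. Such a segment avoids the largest point, so the iterated local LYM
inequality on `n - 1` points bounds its shadow, giving
`min(|G₂|, C(n-1, t-1)) · C(n-1, t) ≤ |D| · C(n-1, t-1)`. With `|G₂| ≤ |G₁|` this forces
`|G₂| ≤ C(n-1, t-1)` and `t|G₁| + (n-t)|G₂| ≤ t C(n, t)`; the bound for arbitrary `c` is then a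
linear interpolation between the two terms of the maximum.
-/

open Finset Finset.Colex FinsetFamily

namespace Finset

variable {α β : Type*} [DecidableEq α] [DecidableEq β]

lemma shadow_map (f : α ↪ β) (𝒜 : Finset (Finset α)) :
    ∂ (𝒜.map (mapEmbedding f).toEmbedding) = (∂ 𝒜).map (mapEmbedding f).toEmbedding := by
  ext t
  simp only [mem_shadow_iff, mem_map, RelEmbedding.coe_toEmbedding, mapEmbedding_apply]
  constructor
  · rintro ⟨_, ⟨s, hs, rfl⟩, _, hb, rfl⟩
    obtain ⟨a, ha, rfl⟩ := mem_map.1 hb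
    exact ⟨s.erase a, ⟨s, hs, a, ha, rfl⟩, map_erase f s a⟩
  · rintro ⟨_, ⟨s, hs, a, ha, rfl⟩, rfl⟩
    exact ⟨s.map f, ⟨s, hs, rfl⟩, f a, mem_map_of_mem f ha, (map_erase f s a).symm⟩

lemma shadow_iterate_map (f : α ↪ β) (k : ℕ) (𝒜 : Finset (Finset α)) :
    ∂^[k] (𝒜.map (mapEmbedding f).toEmbedding) = (∂^[k] 𝒜).map (mapEmbedding f).toEmbedding :=
  ((Function.Semiconj.iterate_right (fun 𝒜 ↦ (shadow_map f 𝒜).symm) k) 𝒜).symm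

variable {𝕜 : Type*} [Semifield 𝕜] [LinearOrder 𝕜] [IsStrictOrderedRing 𝕜] [Fintype α]

theorem card_div_choose_le_card_shadow_iterate_div_choose {𝒜 : Finset (Finset α)} {r k : ℕ}
    (hkr : k ≤ r) (h𝒜 : (𝒜 : Set (Finset α)).Sized r) :
    (#𝒜 : 𝕜) / (Fintype.card α).choose r ≤ #(∂^[k] 𝒜) / (Fintype.card α).choose (r - k) := by
  induction k generalizing 𝒜 r with
  | zero => simp
  | succ k ih =>
    rw [Function.iterate_succ_apply, Nat.sub_succ', Nat.sub_right_comm]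
    exact (card_div_choose_le_card_shadow_div_choose (by omega) h𝒜).trans
      (ih (by omega) h𝒜.shadow)

end Finset

namespace Finset.Colex

variable {α : Type*} [LinearOrder α] [Fintype α]

lemma exists_isInitSeg_card_eq {r b : ℕ} (hb : b ≤ (Fintype.card α).choose r) :
    ∃ 𝒞 : Finset (Finset α), IsInitSeg 𝒞 r ∧ #𝒞 = b := by
  induction b with
  | zero => exact ⟨∅, isInitSeg_empty, rfl⟩
  | succ b ih =>
    obtain ⟨𝒞, h𝒞, rfl⟩ := ih (by omega)
    have hrest : (powersetCard r univ \ 𝒞).Nonempty := by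
      rw [← card_pos, card_sdiff_of_subset fun s hs ↦ mem_powersetCard_univ.2 (h𝒞.1 hs),
        card_powersetCard, card_univ]
      omega
    obtain ⟨s, hs, hmin⟩ := exists_min_image _ toColex hrest
    obtain ⟨hsr, hs𝒞⟩ := mem_sdiff.1 hs
    refine ⟨insert s 𝒞, ⟨?_, ?_⟩, card_insert_of_notMem hs𝒞⟩
    · exact subset_powersetCard_univ_iff.1
        (insert_subset hsr (subset_powersetCard_univ_iff.2 h𝒞.1))
    · rintro u v hu ⟨hvu, hv⟩
      refine mem_insert_of_mem (by_contra fun hv𝒞 ↦ ?_)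
      obtain rfl | hu := mem_insert.1 hu
      · exact (hmin v (mem_sdiff.2 ⟨mem_powersetCard_univ.2 hv, hv𝒞⟩)).not_gt hvu
      · exact hv𝒞 (h𝒞.2 hu ⟨hvu, hv⟩)

lemma IsInitSeg.subset_powersetCard_Iio_last {N r : ℕ} {𝒞 : Finset (Finset (Fin (N + 1)))}
    (h𝒞 : IsInitSeg 𝒞 r) (hcard : #𝒞 ≤ N.choose r) :
    𝒞 ⊆ (Iio (Fin.last N)).powersetCard r := by
  intro A hA
  refine mem_powersetCard.2 ⟨fun a ha ↦ ?_, h𝒞.1 hA⟩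
  by_contra hlast
  obtain rfl : a = Fin.last N := (Fin.le_last a).antisymm (not_lt.1 (mt mem_Iio.2 hlast))
  -- every `r`-set avoiding `last N` precedes `A` in colex, which leaves no room in `𝒞` for `A`
  have hbelow : (Iio (Fin.last N)).powersetCard r ⊆ 𝒞 := fun B hB ↦ by
    obtain ⟨hBI, hBr⟩ := mem_powersetCard.1 hB
    have hlB : Fin.last N ∉ B := fun h ↦ by simpa using hBI h
    refine h𝒞.2 hA ⟨toColex_lt_toColex_iff_exists_forall_lt.2 ⟨_, ha, hlB, fun b _ hbA ↦ ?_⟩, hBr⟩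
    exact (Fin.le_last b).lt_of_ne (by rintro rfl; exact hbA ha)
  have hA' : A ∉ (Iio (Fin.last N)).powersetCard r := fun h ↦ by
    simpa using (mem_powersetCard.1 h).1 ha
  have := card_le_card (insert_subset hA hbelow)
  rw [card_insert_of_notMem hA', card_powersetCard, Fin.card_Iio, Fin.val_last] at this
  omega

end Finset.Colex

namespace Finset

variable {𝕜 : Type*} [Semifield 𝕜] [LinearOrder 𝕜] [IsStrictOrderedRing 𝕜]

theorem min_card_div_choose_le_card_shadow_iterate_div_choose {N r k : ℕ} (hkr : k ≤ r)
    {ℱ : Finset (Finset (Fin (N + 1)))} (hℱ : (ℱ : Set (Finset (Fin (N + 1)))).Sized r) :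
    ((min #ℱ (N.choose r) : ℕ) : 𝕜) / N.choose r ≤ #(∂^[k] ℱ) / N.choose (r - k) := by
  obtain ⟨𝒞, h𝒞, h𝒞card⟩ := exists_isInitSeg_card_eq (α := Fin (N + 1)) (r := r)
    (b := min #ℱ (N.choose r)) ((min_le_left _ _).trans (by simpa using hℱ.card_le))
  obtain ⟨𝒞', h𝒞'r, rfl⟩ := subset_map_iff.1 <| by
    simpa only [Fin.Iio_last_eq_map, powersetCard_map] using
      h𝒞.subset_powersetCard_Iio_last (h𝒞card.trans_le (min_le_right _ _))
  have hkk : #(∂^[k] (𝒞'.map (mapEmbedding Fin.castSuccEmb).toEmbedding)) ≤ #(∂^[k] ℱ) :=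
    iterated_kk hℱ (h𝒞card.trans_le (min_le_left _ _)) h𝒞
  rw [card_map] at h𝒞card
  rw [shadow_iterate_map, card_map] at hkk
  calc ((min #ℱ (N.choose r) : ℕ) : 𝕜) / N.choose r
      = #𝒞' / (Fintype.card (Fin N)).choose r := by rw [← h𝒞card, Fintype.card_fin]
    _ ≤ #(∂^[k] 𝒞') / (Fintype.card (Fin N)).choose (r - k) :=
      card_div_choose_le_card_shadow_iterate_div_choose hkr
        (subset_powersetCard_univ_iff.1 h𝒞'r)
    _ ≤ #(∂^[k] ℱ) / N.choose (r - k) := by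
      rw [Fintype.card_fin]; gcongr

variable {α : Type*} [DecidableEq α] [Fintype α]

lemma card_add_card_shadow_iterate_compls_le {t : ℕ} {G₁ G₂ : Finset (Finset α)}
    (hG₁ : (G₁ : Set (Finset α)).Sized t) (hG₂ : (G₂ : Set (Finset α)).Sized t)
    (ht : 2 * t ≤ Fintype.card α) (hcross : ∀ A ∈ G₁, ∀ B ∈ G₂, (A ∩ B).Nonempty) :
    #G₁ + #(∂^[Fintype.card α - 2 * t] G₂ᶜˢ) ≤ (Fintype.card α).choose t := by
  set D := ∂^[Fintype.card α - 2 * t] G₂ᶜˢ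
  have hD : (D : Set (Finset α)).Sized t := by
    convert hG₂.compls.shadow_iterate using 1
    omega
  have hdisj : Disjoint G₁ D := disjoint_left.2 fun A hA hAD ↦ by
    obtain ⟨S, hS, hAS, -⟩ := mem_shadow_iterate_iff_exists_sdiff.1 hAD
    obtain ⟨x, hx⟩ := hcross A hA Sᶜ (mem_compls.1 hS)
    exact (mem_compl.1 (mem_inter.1 hx).2) (hAS (mem_inter.1 hx).1)
  rw [← card_union_of_disjoint hdisj]
  exact Set.Sized.card_le (by simpa only [coe_union] using Set.sized_union.2 ⟨hG₁, hD⟩)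

theorem mul_card_add_mul_card_le_mul_choose {n t : ℕ} (ht : 0 < t) (hnt : 2 * t ≤ n)
    {G₁ G₂ : Finset (Finset (Fin n))}
    (hG₁ : (G₁ : Set (Finset (Fin n))).Sized t) (hG₂ : (G₂ : Set (Finset (Fin n))).Sized t)
    (hcross : ∀ A ∈ G₁, ∀ B ∈ G₂, (A ∩ B).Nonempty) (hcard : #G₂ ≤ #G₁) :
    t * #G₁ + (n - t) * #G₂ ≤ t * n.choose t := by
  obtain ⟨N, rfl⟩ : ∃ N, n = N + 1 := ⟨n - 1, by omega⟩
  obtain ⟨s, rfl⟩ : ∃ s, t = s + 1 := ⟨t - 1, by omega⟩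
  rw [Nat.add_sub_add_right]
  have hdisj := card_add_card_shadow_iterate_compls_le hG₁ hG₂ (by simpa using hnt) hcross
  have hshadow := min_card_div_choose_le_card_shadow_iterate_div_choose (𝕜 := ℚ)
    (ℱ := G₂ᶜˢ) (r := N - s) (k := N + 1 - 2 * (s + 1)) (by omega)
    (by simpa only [Fintype.card_fin, Nat.add_sub_add_right] using hG₂.compls)
  simp only [Fintype.card_fin, card_compls] at hdisj hshadow
  rw [show N - s - (N + 1 - 2 * (s + 1)) = s + 1 by omega,
    Nat.choose_symm_of_eq_add (show N = N - s + s by omega)] at hshadow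
  set D := ∂^[N + 1 - 2 * (s + 1)] G₂ᶜˢ
  have hP : 0 < N.choose (s + 1) := Nat.choose_pos (by omega)
  have hQ : 0 < N.choose s := Nat.choose_pos (by omega)
  rw [div_le_div_iff₀ (by exact_mod_cast hQ) (by exact_mod_cast hP)] at hshadow
  replace hshadow : min #G₂ (N.choose s) * N.choose (s + 1) ≤ #D * N.choose s := by
    exact_mod_cast hshadow
  have hpascal := Nat.choose_succ_succ' N s
  have hratio : N.choose (s + 1) * (s + 1) = N.choose s * (N - s) := Nat.choose_succ_right_eq N s
  have hG₂Q : #G₂ ≤ N.choose s := by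
    by_contra! hQG₂
    rw [min_eq_right hQG₂.le, mul_comm] at hshadow
    have := Nat.le_of_mul_le_mul_right hshadow hQ
    omega
  rw [min_eq_left hG₂Q] at hshadow
  have hD : (N - s) * #G₂ ≤ (s + 1) * #D := by
    refine Nat.le_of_mul_le_mul_right ?_ hQ
    calc (N - s) * #G₂ * N.choose s = #G₂ * N.choose (s + 1) * (s + 1) := by
          rw [mul_assoc #G₂, hratio]; ring
      _ ≤ #D * N.choose s * (s + 1) := Nat.mul_le_mul_right _ hshadow
      _ = (s + 1) * #D * N.choose s := by ring
  calc (s + 1) * #G₁ + (N - s) * #G₂ ≤ (s + 1) * (#G₁ + #D) := by rw [mul_add]; omega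
    _ ≤ (s + 1) * (N + 1).choose (s + 1) := Nat.mul_le_mul_left _ hdisj

end Finset

lemma add_mul_le_max_of_mul_add_mul_le {a b c t m P Q : ℝ} (ht : 0 < t) (hb : 0 ≤ b)
    (hbQ : b ≤ Q) (hPQ : t * P = m * Q) (hab : t * a + m * b ≤ t * (Q + P)) :
    a + c * b ≤ max (Q + P) ((c + 1) * Q) := by
  rcases le_total (c * t) m with hct | hct
  · refine le_max_of_le_left (le_of_mul_le_mul_left ?_ ht)
    nlinarith
  · refine le_max_of_le_right (le_of_mul_le_mul_left ?_ ht)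
    nlinarith [mul_le_mul_of_nonneg_left hbQ (sub_nonneg.2 hct)]

theorem card_add_mul_card_le_max {n t : ℕ} (hnt : 2 * t ≤ n)
    {G₁ G₂ : Finset (Finset (Fin n))}
    (hG₁ : (G₁ : Set (Finset (Fin n))).Sized t) (hG₂ : (G₂ : Set (Finset (Fin n))).Sized t)
    (hcross : ∀ A ∈ G₁, ∀ B ∈ G₂, (A ∩ B).Nonempty) (hcard : #G₂ ≤ #G₁) (c : ℝ) :
    (#G₁ : ℝ) + c * #G₂ ≤ max (n.choose t : ℝ) ((c + 1) * (n - 1).choose (t - 1)) := by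
  rcases t.eq_zero_or_pos with rfl | ht
  · have hG₂empty : G₂ = ∅ := eq_empty_of_forall_notMem fun B hB ↦ by
      obtain ⟨A, hA⟩ : G₁.Nonempty := card_pos.1 ((card_pos.2 ⟨B, hB⟩).trans_le hcard)
      simpa [card_eq_zero.1 (hG₁ hA)] using hcross A hA B hB
    refine le_max_of_le_left ?_
    simpa [hG₂empty] using hG₁.card_le
  obtain ⟨N, rfl⟩ : ∃ N, n = N + 1 := ⟨n - 1, by omega⟩
  obtain ⟨s, rfl⟩ : ∃ s, t = s + 1 := ⟨t - 1, by omega⟩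
  have key := mul_card_add_mul_card_le_mul_choose ht hnt hG₁ hG₂ hcross hcard
  have hpascal := Nat.choose_succ_succ' N s
  have hratio := Nat.choose_succ_right_eq N s
  rw [Nat.add_sub_add_right, hpascal] at key
  have hbQ : #G₂ ≤ N.choose s := by
    refine Nat.le_of_mul_le_mul_left ?_ (Nat.succ_pos N)
    calc (N + 1) * #G₂ = (s + 1) * #G₂ + (N - s) * #G₂ := by rw [← add_mul]; congr 1; omega
      _ ≤ (s + 1) * #G₁ + (N - s) * #G₂ := by gcongr
      _ ≤ (s + 1) * (N.choose s + N.choose (s + 1)) := key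
      _ = (N + 1) * N.choose s := by
        rw [show N + 1 = (s + 1) + (N - s) by omega]
        linarith [hratio]
  rw [Nat.add_sub_cancel, Nat.add_sub_cancel, hpascal, Nat.cast_add]
  refine add_mul_le_max_of_mul_add_mul_le (t := ((s + 1 : ℕ) : ℝ)) (m := ((N - s : ℕ) : ℝ))
    (by positivity) (by positivity) (by exact_mod_cast hbQ) ?_ ?_
  · exact_mod_cast by linarith [hratio]
  · exact_mod_cast key

theorem stmt_18_general (n t : ℕ) (hnt : 2 * t ≤ n)
    (G₁ G₂ : Finset (Finset ℕ))
    (hG₁ : G₁ ⊆ (Finset.range n).powersetCard t)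
    (hG₂ : G₂ ⊆ (Finset.range n).powersetCard t)
    (hcross : ∀ A ∈ G₁, ∀ B ∈ G₂, (A ∩ B).Nonempty)
    (hcard : G₂.card ≤ G₁.card)
    (c : ℝ) :
    (G₁.card : ℝ) + c * (G₂.card : ℝ) ≤
      max ((n.choose t : ℝ)) ((c + 1) * ((n - 1).choose (t - 1) : ℝ)) := by
  have hrange : (range n).powersetCard t =
      ((univ : Finset (Fin n)).powersetCard t).map (mapEmbedding Fin.valEmbedding).toEmbedding := by
    rw [← powersetCard_map, Fin.map_valEmbedding_univ, Nat.Iio_eq_range]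
  obtain ⟨G₁', hG₁', rfl⟩ := subset_map_iff.1 (hG₁.trans_eq hrange)
  obtain ⟨G₂', hG₂', rfl⟩ := subset_map_iff.1 (hG₂.trans_eq hrange)
  rw [card_map, card_map] at hcard ⊢
  refine card_add_mul_card_le_max hnt (subset_powersetCard_univ_iff.1 hG₁')
    (subset_powersetCard_univ_iff.1 hG₂') (fun A hA B hB ↦ ?_) hcard c
  simpa only [RelEmbedding.coe_toEmbedding, mapEmbedding_apply, ← map_inter, map_nonempty] using
    hcross _ (mem_map_of_mem _ hA) _ (mem_map_of_mem _ hB)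

theorem stmt_18 (n t : ℕ) (hnt : 2 * t ≤ n)
    (G₁ G₂ : Finset (Finset ℕ))
    (hG₁ : G₁ ⊆ (Finset.range n).powersetCard t)
    (hG₂ : G₂ ⊆ (Finset.range n).powersetCard t)
    (hcross : ∀ A ∈ G₁, ∀ B ∈ G₂, (A ∩ B).Nonempty)
    (hcard : G₂.card ≤ G₁.card)
    (c : ℝ) (hc : 1 ≤ c) :
    (G₁.card : ℝ) + c * (G₂.card : ℝ) ≤
      max ((n.choose t : ℝ)) ((c + 1) * ((n - 1).choose (t - 1) : ℝ)) :=
  stmt_18_general n t hnt G₁ G₂ hG₁ hG₂ hcross hcard c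
end
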